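/- The polynomial f̃(x,y,z) = −xy − 2z + x²z + y²z − xyz² + z³ defines a smooth affine surface in ℂ³: there is no point (x,y,z) ∈ ℂ³ at which f̃ and all three of its partial derivatives ∂f̃/∂x = −y + 2xz − yz², ∂f̃/∂y = −x + 2yz − xz², ∂f̃/∂z = −2 + x² + y² − 2xyz + 3z² vanish simultaneously. -/
import Mathlib


/-- The defining polynomial of the affine canonical component of the
character variety of the Whitehead link complement. -/
def whiteheadF (x y z : ℂ) : ℂ := -x*y - 2*z + x^2*z + y^2*z - x*y*z^2 + z^3

theorem canonical_component_affine_smooth :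
    ¬ ∃ x y z : ℂ, whiteheadF x y z = 0 ∧
      -y + 2*x*z - y*z^2 = 0 ∧
      -x + 2*y*z - x*z^2 = 0 ∧
      -2 + x^2 + y^2 - 2*x*y*z + 3*z^2 = 0 := by
  rintro ⟨x, y, z, hf, hx, hy, hz⟩
  unfold whiteheadF at hf
  have hY : y * (z^2 - 1)^2 = 0 := by linear_combination (-(1+z^2))*hx - 2*z*hy
  have hX : x * (z^2 - 1)^2 = 0 := by linear_combination (-(1+z^2))*hy - 2*z*hx
  by_cases hz2 : z^2 - 1 = 0
  · have hyx : y - x*z = 0 := by linear_combination (-1/2)*hx - (y/2)*hz2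
    have h1 : (1:ℂ) = 0 := by
      linear_combination hz - (y - x*z)*hyx - (3 - x^2)*hz2
    exact one_ne_zero h1
  · have hpow : (z^2 - 1)^2 ≠ 0 := pow_ne_zero _ hz2
    have hx0 : x = 0 := by
      rcases mul_eq_zero.mp hX with h | h
      · exact h
      · exact absurd h hpow
    have hy0 : y = 0 := by
      rcases mul_eq_zero.mp hY with h | h
      · exact h
      · exact absurd h hpow
    subst hx0; subst hy0
    have hz0 : z = 0 := by linear_combination (-3/4)*hf + (z/4)*hz
    subst hz0
    simp at hz
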